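/- arXiv:1205.1778 — 2 statements merged into one kernel-verified Lean document; each statement's English description precedes it below -/
import Mathlib

section
/- For every integer k ≥ 3 and every odd positive integer n, the number of alternating permutations of length n avoiding 12⋯k is at least the number of alternating permutations of length n avoiding 12⋯(k-2)k(k-1). -/
/-!
Call `b` a chain top of `p` if an increasing subsequence of length `k - 1` ends at `b`. When `p`
avoids `12⋯(k-2)k(k-1)`, every descent `x, y` with `b ≤ x` satisfies `p y < p b`. Hence, for
alternating `p`, chain tops are peaks and the neighbours of a chain top lie below every chain top
weakly to its left.

Now re-sort the values at the chain tops into decreasing order. Each chain top then carries a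
value at least that of some chain top weakly to its left, so the result is still alternating. The
chain tops stay the same, and from a chain top an increasing run can only move on to another
chain top, where the values now decrease; as the first `k - 1` terms of a `12⋯k` end at a chain
top, `12⋯k` is destroyed. The map is injective: at the first position where two preimages
differ, the larger value would complete an occurrence of `12⋯(k-2)k(k-1)`.
-/

open Function

def Contains {n k : ℕ} (p : Fin n → Fin n) (q : Fin k → Fin k) : Prop :=
  ∃ f : Fin k → Fin n, StrictMono f ∧ ∀ a b : Fin k, q a < q b ↔ p (f a) < p (f b)

def Avoids {n k : ℕ} (p : Fin n → Fin n) (q : Fin k → Fin k) : Prop :=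
  ¬ Contains p q

noncomputable def rank {n : ℕ} (p : Fin n → Fin n) (i : Fin n) : ℕ :=
  sSup {m | ∃ f : Fin m → Fin n, StrictMono f ∧ StrictMono (p ∘ f) ∧
    ∃ hm : 0 < m, f ⟨m - 1, Nat.sub_lt hm Nat.one_pos⟩ = i}

noncomputable def corank {n : ℕ} (p : Fin n → Fin n) (i : Fin n) : ℕ :=
  sSup {m | ∃ f : Fin m → Fin n, StrictMono f ∧ StrictMono (p ∘ f) ∧
    ∃ hm : 0 < m, f ⟨0, hm⟩ = i}

def Alternating {n : ℕ} (p : Fin n → Fin n) : Prop :=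
  ∀ (i : ℕ) (h : i + 1 < n), p ⟨i, by omega⟩ < p ⟨i + 1, h⟩ ↔ i % 2 = 0

def IsPeak {n : ℕ} (p : Fin n → Fin n) (i : Fin n) : Prop :=
  (∀ _ : 0 < i.1, p ⟨i.1 - 1, lt_of_le_of_lt (Nat.sub_le _ _) i.2⟩ < p i) ∧
  (∀ h : i.1 + 1 < n, p ⟨i.1 + 1, h⟩ < p i)

def IsValley {n : ℕ} (p : Fin n → Fin n) (i : Fin n) : Prop :=
  (∀ _ : 0 < i.1, p i < p ⟨i.1 - 1, lt_of_le_of_lt (Nat.sub_le _ _) i.2⟩) ∧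
  (∀ h : i.1 + 1 < n, p i < p ⟨i.1 + 1, h⟩)

theorem Fin.strictMono_snoc {α : Type*} [Preorder α] {m : ℕ} {f : Fin m → α} {a : α}
    (hf : StrictMono f) (ha : ∀ i, f i < a) : StrictMono (Fin.snoc f a : Fin (m + 1) → α) := by
  rw [← Fin.insertNth_last', Fin.strictMono_insertNth_iff]
  exact ⟨hf, fun i _ => ha i, fun i hi => absurd hi (not_le.2 (Fin.castSucc_lt_last i))⟩

section Chains

variable {α β : Type*} [Preorder α] [Preorder β] {p q : α → β} {m : ℕ}

def ChainBelow (p : α → β) (m : ℕ) (x : α) (v : β) : Prop :=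
  ∃ w : Fin m → α, StrictMono w ∧ StrictMono (p ∘ w) ∧ ∀ t, w t < x ∧ p (w t) < v

theorem ChainBelow.mono {x x' : α} {v v' : β} (h : ChainBelow p m x v) (hx : x ≤ x')
    (hv : v ≤ v') : ChainBelow p m x' v' :=
  let ⟨w, hw, hpw, hlt⟩ := h
  ⟨w, hw, hpw, fun t => ⟨(hlt t).1.trans_le hx, (hlt t).2.trans_le hv⟩⟩

variable [Fintype α] {b c : α}

open Classical in
noncomputable def chainTops (p : α → β) (m : ℕ) : Finset α :=
  {b | ChainBelow p m b (p b)}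

theorem mem_chainTops : b ∈ chainTops p m ↔ ChainBelow p m b (p b) := by
  simp [chainTops]

theorem mem_chainTops_of_lt (hb : b ∈ chainTops p m) (hbc : b < c) (hpbc : p b < p c) :
    c ∈ chainTops p m :=
  mem_chainTops.2 ((mem_chainTops.1 hb).mono hbc.le hpbc.le)

theorem chainBelow_of_mem_chainTops (hq : ∀ x ∉ chainTops p m, q x = p x)
    (hb : b ∈ chainTops p m) : ChainBelow q m b (p b) := by
  induction b using WellFoundedLT.induction with
  | _ b ih =>
    obtain ⟨w, hw, hpw, hlt⟩ := mem_chainTops.1 hb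
    by_cases htop : ∃ t, w t ∈ chainTops p m
    · obtain ⟨t, ht⟩ := htop
      exact (ih _ (hlt t).1 ht).mono (hlt t).1.le (hlt t).2.le
    · have hqw : ∀ t, q (w t) = p (w t) := fun t => hq _ fun h => htop ⟨t, h⟩
      exact ⟨w, hw, (show q ∘ w = p ∘ w from funext hqw) ▸ hpw,
        fun t => ⟨(hlt t).1, hqw t ▸ (hlt t).2⟩⟩

end Chains

section Rearrange

variable {α β : Type*} [LinearOrder α] [LinearOrder β]

theorem exists_le_and_le_of_antitoneOn_comp {p : α → β} {σ : α → α} {S : Finset α}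
    (hσ : Set.MapsTo σ S S) (hinj : Set.InjOn σ S) (hanti : AntitoneOn (p ∘ σ) S)
    {b : α} (hb : b ∈ S) : ∃ b' ∈ S, b' ≤ b ∧ p b' ≤ p (σ b) := by
  -- otherwise `σ` would inject `{x ∈ S | b ≤ x}` into its proper subset `{x ∈ S | b < x}`
  by_contra! hbig
  have hmaps : ∀ x ∈ S.filter (b ≤ ·), σ x ∈ S.filter (b < ·) := by
    intro x hx
    rw [Finset.mem_filter] at hx ⊢
    refine ⟨hσ hx.1, lt_of_not_ge fun hxb => ?_⟩
    exact (hbig _ (hσ hx.1) hxb).not_ge (hanti hb hx.1 hx.2)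
  have hlt : (S.filter (b < ·)).card < (S.filter (b ≤ ·)).card :=
    Finset.card_lt_card <| Finset.ssubset_iff_of_subset
      (fun x hx => by simp only [Finset.mem_filter] at hx ⊢; exact ⟨hx.1, hx.2.le⟩) |>.2
      ⟨b, by simp [hb], by simp⟩
  exact hlt.not_ge <| Finset.card_le_card_of_injOn σ hmaps <|
    hinj.mono fun x hx => (Finset.mem_filter.1 hx).1

/-- Sends the `i`-th element of `S` to the element of `S` carrying the `i`-th largest value of `p`
on `S`, and fixes everything outside `S`. -/
noncomputable def descSortPerm (S : Finset α) (p : α → β) : Equiv.Perm α :=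
  Equiv.Perm.ofSubtype <| (S.orderIsoOfFin rfl).symm.toEquiv.trans <|
    Fin.revPerm.trans <|
      (Tuple.sort (p ∘ (↑) ∘ S.orderIsoOfFin rfl)).trans (S.orderIsoOfFin rfl).toEquiv

variable {S : Finset α} {p : α → β}

theorem descSortPerm_of_notMem {x : α} (hx : x ∉ S) : descSortPerm S p x = x :=
  Equiv.Perm.ofSubtype_apply_of_not_mem _ hx

theorem descSortPerm_orderIsoOfFin (i : Fin S.card) :
    descSortPerm S p (S.orderIsoOfFin rfl i) =
      S.orderIsoOfFin rfl (Tuple.sort (p ∘ (↑) ∘ S.orderIsoOfFin rfl) i.rev) := by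
  simp [descSortPerm, Equiv.Perm.ofSubtype_apply_of_mem]
  exact (S.orderIsoOfFin rfl).symm_apply_apply i

theorem mapsTo_descSortPerm : Set.MapsTo (descSortPerm S p) S S := by
  intro x hx
  rw [Finset.mem_coe, descSortPerm, Equiv.Perm.ofSubtype_apply_of_mem _ hx]
  exact Subtype.property _

theorem strictAntiOn_descSortPerm (hp : Set.InjOn p S) :
    StrictAntiOn (p ∘ descSortPerm S p) S := by
  have hsort : StrictMono ((p ∘ (↑) ∘ S.orderIsoOfFin rfl) ∘
      Tuple.sort (p ∘ (↑) ∘ S.orderIsoOfFin rfl)) :=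
    (Tuple.monotone_sort _).strictMono_of_injective fun i j h => (Tuple.sort _).injective <|
      (S.orderIsoOfFin rfl).injective <| Subtype.ext <|
        hp (Subtype.property _) (Subtype.property _) h
  intro x hx y hy hxy
  obtain ⟨i, rfl⟩ : ∃ i, (S.orderIsoOfFin rfl i : α) = x :=
    ⟨_, congrArg Subtype.val ((S.orderIsoOfFin rfl).apply_symm_apply ⟨x, hx⟩)⟩
  obtain ⟨j, rfl⟩ : ∃ j, (S.orderIsoOfFin rfl j : α) = y :=
    ⟨_, congrArg Subtype.val ((S.orderIsoOfFin rfl).apply_symm_apply ⟨y, hy⟩)⟩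
  simp only [Function.comp_apply, descSortPerm_orderIsoOfFin]
  exact hsort (Fin.rev_lt_rev.2 ((S.orderIsoOfFin rfl).lt_iff_lt.1 hxy))

end Rearrange

section SortChainTops

variable {α β : Type*} [LinearOrder α] [Fintype α] [LinearOrder β] {p : α → β} {m : ℕ}
  {a b c : α}

noncomputable def sortChainTops (p : α → β) (m : ℕ) : α → β :=
  p ∘ descSortPerm (chainTops p m) p

theorem sortChainTops_of_notMem (hb : b ∉ chainTops p m) : sortChainTops p m b = p b :=
  congrArg p (descSortPerm_of_notMem hb)

theorem Function.Injective.sortChainTops (hp : Injective p) : Injective (sortChainTops p m) :=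
  hp.comp (Equiv.injective _)

theorem strictAntiOn_sortChainTops (hp : Injective p) :
    StrictAntiOn (sortChainTops p m) (chainTops p m) :=
  strictAntiOn_descSortPerm hp.injOn

theorem exists_le_sortChainTops (hp : Injective p) (hb : b ∈ chainTops p m) :
    ∃ b' ∈ chainTops p m, b' ≤ b ∧ p b' ≤ sortChainTops p m b :=
  exists_le_and_le_of_antitoneOn_comp mapsTo_descSortPerm (Equiv.injective _).injOn
    (strictAntiOn_sortChainTops hp).antitoneOn hb

theorem mem_chainTops_of_sortChainTops_lt (hp : Injective p) (ha : a ∈ chainTops p m)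
    (hac : a < c) (h : sortChainTops p m a < sortChainTops p m c) : c ∈ chainTops p m := by
  by_contra hc
  rw [sortChainTops_of_notMem hc] at h
  obtain ⟨b', hb', hb'a, hpb'⟩ := exists_le_sortChainTops hp ha
  exact hc (mem_chainTops_of_lt hb' (hb'a.trans_lt hac) (hpb'.trans_lt h))

theorem chainTops_sortChainTops (hp : Injective p) :
    chainTops (sortChainTops p m) m = chainTops p m := by
  ext b
  constructor
  · intro hb
    by_contra hbp
    obtain ⟨w, hw, hqw, hlt⟩ := mem_chainTops.1 hb
    have hwp : ∀ t, sortChainTops p m (w t) = p (w t) := fun t =>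
      sortChainTops_of_notMem fun hwt =>
        hbp (mem_chainTops_of_sortChainTops_lt hp hwt (hlt t).1 (hlt t).2)
    have hpw : StrictMono (p ∘ w) :=
      (show sortChainTops p m ∘ w = p ∘ w from funext hwp) ▸ hqw
    refine hbp (mem_chainTops.2 ⟨w, hw, hpw, fun t => ⟨(hlt t).1, ?_⟩⟩)
    simpa [hwp, sortChainTops_of_notMem hbp] using (hlt t).2
  · intro hb
    obtain ⟨b', hb', hle, hv⟩ := exists_le_sortChainTops hp hb
    exact mem_chainTops.2 <|
      (chainBelow_of_mem_chainTops (fun _ hx => sortChainTops_of_notMem hx) hb').mono hle hv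

end SortChainTops

section Patterns

variable {n : ℕ}

theorem contains_iff_exists_strictMono {k : ℕ} (p : Fin n → Fin n) (q : Equiv.Perm (Fin k)) :
    Contains p q ↔ ∃ f : Fin k → Fin n, StrictMono f ∧ StrictMono (p ∘ f ∘ q.symm) := by
  refine exists_congr fun f => and_congr_right fun _ => ⟨fun h a b hab => ?_, fun h a b => ?_⟩
  · simpa using (h (q.symm a) (q.symm b)).1 (by simpa using hab)
  · simpa using (h.lt_iff_lt (a := q a) (b := q b)).symm

def flipLast (m : ℕ) : Equiv.Perm (Fin (m + 2)) :=
  Equiv.swap (Fin.last m).castSucc (Fin.last (m + 1))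

variable {m : ℕ} {p : Fin n → Fin n}

theorem contains_flipLast {x y : Fin n} (h : ChainBelow p m x (p y)) (hxy : x < y)
    (hyx : p y < p x) : Contains p (flipLast m) := by
  obtain ⟨w, hw, hpw, hlt⟩ := h
  rw [contains_iff_exists_strictMono]
  refine ⟨Fin.snoc (Fin.snoc w x) y, Fin.strictMono_snoc (Fin.strictMono_snoc hw
    fun t => (hlt t).1) fun i => ?_, ?_⟩
  · cases i using Fin.lastCases <;> simp [hxy, (hlt _).1.trans hxy]
  have hcomp : p ∘ Fin.snoc (Fin.snoc w x) y ∘ (flipLast m).symm =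
      Fin.snoc (Fin.snoc (p ∘ w) (p y) : Fin (m + 1) → Fin n) (p x) := by
    funext i
    cases i using Fin.lastCases with
    | last => simp [flipLast]
    | cast i =>
      cases i using Fin.lastCases with
      | last => simp [flipLast]
      | cast i => simp [flipLast, Equiv.swap_apply_of_ne_of_ne, (Fin.castSucc_lt_last _).ne]
  rw [hcomp]
  refine Fin.strictMono_snoc (Fin.strictMono_snoc hpw fun t => (hlt t).2) fun i => ?_
  cases i using Fin.lastCases <;> simp [hyx, (hlt _).2.trans hyx]

theorem lt_of_mem_chainTops_of_descent (hav : Avoids p (flipLast m)) {b x y : Fin n}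
    (hb : b ∈ chainTops p m) (hbx : b ≤ x) (hxy : x < y) (hyx : p y < p x) : p y < p b :=
  lt_of_not_ge fun h => hav (contains_flipLast ((mem_chainTops.1 hb).mono hbx h) hxy hyx)

theorem lt_of_succ_mem_chainTops (hav : Avoids p (flipLast m)) (hp : Injective p) {i : ℕ}
    (hi : i + 1 < n) (h : ⟨i + 1, hi⟩ ∈ chainTops p m) :
    p ⟨i, by omega⟩ < p ⟨i + 1, hi⟩ := by
  refine lt_of_not_ge fun hle => hav (contains_flipLast ?_ (Fin.mk_lt_mk.2 i.lt_succ_self)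
    (hle.lt_of_ne (hp.ne (by simp))))
  obtain ⟨w, hw, hpw, hlt⟩ := mem_chainTops.1 h
  refine ⟨w, hw, hpw, fun t => ⟨?_, (hlt t).2⟩⟩
  have hwi : (w t).val < i + 1 := (hlt t).1
  have hwi' : (w t).val ≠ i := fun he => ((hlt t).2.trans_le hle).ne (congrArg p (Fin.ext he))
  show (w t).val < i
  omega

theorem Alternating.apply_succ_lt (halt : Alternating p) (hp : Injective p) {i : ℕ}
    (hi : i + 1 < n) (ho : i % 2 = 1) : p ⟨i + 1, hi⟩ < p ⟨i, by omega⟩ :=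
  lt_of_le_of_ne (not_lt.1 fun h => by have := (halt i hi).1 h; omega) (hp.ne (by simp))

theorem odd_of_mem_chainTops (halt : Alternating p) (hav : Avoids p (flipLast m))
    (hp : Injective p) (hm : 0 < m) {b : Fin n} (hb : b ∈ chainTops p m) : b.val % 2 = 1 := by
  obtain ⟨w, -, -, hlt⟩ := mem_chainTops.1 hb
  obtain ⟨_ | i, hi⟩ := b
  · exact absurd (hlt ⟨0, hm⟩).1 (Nat.not_lt_zero _)
  · have := (halt i hi).1 (lt_of_succ_mem_chainTops hav hp hi hb)
    simp only
    omega

theorem apply_succ_lt_sortChainTops (halt : Alternating p) (hav : Avoids p (flipLast m))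
    (hp : Injective p) (hm : 0 < m) {i : ℕ} (hi : i + 1 < n)
    (hx : ⟨i, by omega⟩ ∈ chainTops p m) :
    p ⟨i + 1, hi⟩ < sortChainTops p m ⟨i, by omega⟩ := by
  obtain ⟨b', hb', hle, hv⟩ := exists_le_sortChainTops hp hx
  have ho : i % 2 = 1 := odd_of_mem_chainTops halt hav hp hm hx
  exact (lt_of_mem_chainTops_of_descent hav hb' hle (Fin.mk_lt_mk.2 i.lt_succ_self)
    (halt.apply_succ_lt hp hi ho)).trans_le hv

theorem apply_lt_sortChainTops_succ (halt : Alternating p) (hav : Avoids p (flipLast m))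
    (hp : Injective p) (hm : 0 < m) {i : ℕ} (hi : i + 1 < n)
    (hy : ⟨i + 1, hi⟩ ∈ chainTops p m) :
    p ⟨i, by omega⟩ < sortChainTops p m ⟨i + 1, hi⟩ := by
  obtain ⟨b', hb', hle, hv⟩ := exists_le_sortChainTops hp hy
  have he : (i + 1) % 2 = 1 := odd_of_mem_chainTops halt hav hp hm hy
  refine lt_of_lt_of_le ?_ hv
  rcases hle.lt_or_eq with hlt | rfl
  · -- `b'` is odd and `i` is even, so `b' ≤ i - 1`, and `i - 1, i` is a descent
    have hb'o : b'.val % 2 = 1 := odd_of_mem_chainTops halt hav hp hm hb'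
    have hb'i : b'.val < i + 1 := hlt
    obtain ⟨j, rfl⟩ : ∃ j, i = j + 1 := ⟨i - 1, by omega⟩
    exact lt_of_mem_chainTops_of_descent hav hb' (Fin.le_def.2 (by simp only; omega))
      (Fin.mk_lt_mk.2 j.lt_succ_self) (halt.apply_succ_lt hp _ (by omega))
  · exact (halt i hi).2 (by omega)

theorem alternating_sortChainTops (halt : Alternating p) (hav : Avoids p (flipLast m))
    (hp : Injective p) (hm : 0 < m) : Alternating (sortChainTops p m) := by
  intro i hi
  have hodd := fun {b} hb => odd_of_mem_chainTops halt hav hp hm (b := b) hb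
  rcases Nat.mod_two_eq_zero_or_one i with he | ho
  · have hx : (⟨i, by omega⟩ : Fin n) ∉ chainTops p m := fun h => by
      have := hodd h; simp only at this; omega
    rw [iff_true_intro he, iff_true, sortChainTops_of_notMem hx]
    by_cases hy : (⟨i + 1, hi⟩ : Fin n) ∈ chainTops p m
    · exact apply_lt_sortChainTops_succ halt hav hp hm hi hy
    · rw [sortChainTops_of_notMem hy]
      exact (halt i hi).2 he
  · have hy : (⟨i + 1, hi⟩ : Fin n) ∉ chainTops p m := fun h => by
      have := hodd h; simp only at this; omega
    rw [sortChainTops_of_notMem hy]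
    refine iff_of_false (not_lt.2 (le_of_lt ?_)) (by omega)
    by_cases hx : (⟨i, by omega⟩ : Fin n) ∈ chainTops p m
    · exact apply_succ_lt_sortChainTops halt hav hp hm hi hx
    · rw [sortChainTops_of_notMem hx]
      exact halt.apply_succ_lt hp hi ho

theorem avoids_id_sortChainTops (hp : Injective p) :
    Avoids (sortChainTops p m) (id : Fin (m + 2) → Fin (m + 2)) := by
  rintro ⟨f, hf, hiff⟩
  have hqf : StrictMono (sortChainTops p m ∘ f) := fun a b h => (hiff a b).1 h
  have hlast : (Fin.last m).castSucc < Fin.last (m + 1) := Fin.castSucc_lt_last _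
  have hb : f (Fin.last m).castSucc ∈ chainTops p m := by
    rw [← chainTops_sortChainTops hp, mem_chainTops]
    have hcast : StrictMono (Fin.castSucc ∘ Fin.castSucc : Fin m → Fin (m + 2)) :=
      Fin.strictMono_castSucc.comp Fin.strictMono_castSucc
    refine ⟨f ∘ Fin.castSucc ∘ Fin.castSucc, hf.comp hcast, hqf.comp hcast,
      fun t => ⟨hf ?_, hqf ?_⟩⟩ <;>
      exact Fin.castSucc_lt_castSucc_iff.2 (Fin.castSucc_lt_last t)
  have hc := mem_chainTops_of_sortChainTops_lt hp hb (hf hlast) (hqf hlast)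
  exact (strictAntiOn_sortChainTops hp hb hc (hf hlast)).not_gt (hqf hlast)

theorem not_lt_at_first_difference {p₁ p₂ : Fin n → Fin n} (hp₁ : Injective p₁)
    (hp₂ : Surjective p₂) (hav₂ : Avoids p₂ (flipLast m))
    (hoff : ∀ x ∉ chainTops p₁ m, p₂ x = p₁ x) {b : Fin n} (hb : b ∈ chainTops p₁ m)
    (hbefore : ∀ x < b, p₂ x = p₁ x) : ¬ p₁ b < p₂ b := by
  intro hlt
  obtain ⟨x, hx⟩ := hp₂ (p₁ b)
  have hbx : b < x := by
    rcases lt_trichotomy x b with h | rfl | h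
    · exact absurd (hp₁ ((hbefore x h).symm.trans hx)) h.ne
    · exact absurd hx hlt.ne'
    · exact h
  exact hav₂ (contains_flipLast ((chainBelow_of_mem_chainTops hoff hb).mono le_rfl hx.ge) hbx
    (hx ▸ hlt))

theorem eq_of_sortChainTops_eq {p₁ p₂ : Fin n → Fin n} (hp₁ : Bijective p₁)
    (hp₂ : Bijective p₂) (hav₁ : Avoids p₁ (flipLast m)) (hav₂ : Avoids p₂ (flipLast m))
    (h : sortChainTops p₁ m = sortChainTops p₂ m) : p₁ = p₂ := by
  have hT : chainTops p₁ m = chainTops p₂ m := by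
    rw [← chainTops_sortChainTops hp₁.1, h, chainTops_sortChainTops hp₂.1]
  have hoff : ∀ x ∉ chainTops p₁ m, p₂ x = p₁ x := fun x hx => by
    rw [← sortChainTops_of_notMem hx, h, sortChainTops_of_notMem (hT ▸ hx)]
  by_contra hne
  obtain ⟨b, hb, hmin⟩ := WellFounded.has_min wellFounded_lt {x | p₁ x ≠ p₂ x}
    (Function.ne_iff.1 hne)
  have hbT : b ∈ chainTops p₁ m := by_contra fun hbT => hb (hoff b hbT).symm
  have hbefore : ∀ x < b, p₂ x = p₁ x := fun x hx =>
    by_contra fun hne => hmin x (Ne.symm hne) hx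
  rcases lt_or_gt_of_ne hb with hlt | hlt
  · exact not_lt_at_first_difference hp₁.1 hp₂.2 hav₂ hoff hbT hbefore hlt
  · exact not_lt_at_first_difference hp₂.1 hp₁.2 hav₁ (fun x hx => (hoff x (hT ▸ hx)).symm)
      (hT ▸ hbT) (fun x hx => (hbefore x hx).symm) hlt

end Patterns

theorem stmt11 (k n : ℕ) (hk : 3 ≤ k) :
    Nat.card {p : Fin n → Fin n // Function.Bijective p ∧ Alternating p ∧
      Avoids p ⇑(Equiv.swap (⟨k - 2, by omega⟩ : Fin k) ⟨k - 1, by omega⟩)} ≤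
    Nat.card {p : Fin n → Fin n // Function.Bijective p ∧ Alternating p ∧
      Avoids p (id : Fin k → Fin k)} := by
  obtain ⟨m, rfl⟩ : ∃ m, k = m + 2 := ⟨k - 2, by omega⟩
  have hτ : Equiv.swap (⟨m + 2 - 2, by omega⟩ : Fin (m + 2)) ⟨m + 2 - 1, by omega⟩ =
      flipLast m := rfl
  simp only [hτ]
  refine Nat.card_le_card_of_injective (fun p => ⟨sortChainTops p.1 m,
    Finite.injective_iff_bijective.1 p.2.1.1.sortChainTops,
    alternating_sortChainTops p.2.2.1 p.2.2.2 p.2.1.1 (by omega),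
    avoids_id_sortChainTops p.2.1.1⟩) fun p₁ p₂ h => Subtype.ext <|
      eq_of_sortChainTops_eq p₁.2.1 p₂.2.1 p₁.2.2.2 p₂.2.2.2 (congrArg Subtype.val h)
end

section
/- For every integer k ≥ 3 and every positive integer n, the number of permutations of length n avoiding 12⋯k equals the number of permutations of length n avoiding 213⋯k (the identity with its first two values transposed). -/
open Function

/-!
Write `k = m + 3` and shade the cell `(x, y)` for `p` when some increasing subsequence of `p` of
length `m + 1` lies strictly north-east of it. The shaded cells form a Ferrers board (a lower set
of `Fin n × Fin n`), and `p` contains `12⋯k` iff it has an ascent `i < j` with `(j, p j)` shaded,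
and contains `213⋯k` iff it has an inversion `i < j` with `(j, p i)` shaded. So if `C` is the set
of positions whose points are shaded, `p` avoids `12⋯k` iff it is decreasing on `C`, and avoids
`213⋯k` iff it has no inversion on `C` whose corner `(j, p i)` lies in the board.

Permuting the values of `p` on `C` while keeping all its points in the board does not change the
board, since each of these increasing subsequences can be chosen to avoid `C`. Among these
rearrangements exactly one is decreasing and exactly one has no inversion with corner in the board
(place the largest value greedily and induct), and exchanging the two is the bijection.
-/

open Matrix

noncomputable def bijectiveSubtypeEquivPerm {α : Type*} (Q : (α → α) → Prop) :
    {p : α → α // Bijective p ∧ Q p} ≃ {P : Equiv.Perm α // Q P} :=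
  (Equiv.subtypeSubtypeEquivSubtypeInter _ _).symm.trans
    (Equiv.bijectiveEquiv.subtypeEquiv fun _ => Iff.rfl)

section Rearrangement

variable {α : Type*} {B : Set (α × α)} {C : Finset α} {p q : Equiv.Perm α}

structure IsRearrangement (B : Set (α × α)) (C : Finset α) (p q : Equiv.Perm α) : Prop where
  eq_of_notMem : ∀ j ∉ C, q j = p j
  mem_board : ∀ j ∈ C, (j, q j) ∈ B

lemma isRearrangement_empty_iff : IsRearrangement B ∅ p q ↔ q = p :=
  ⟨fun h => Equiv.ext fun j => h.eq_of_notMem j (Finset.notMem_empty j),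
    by rintro rfl; exact ⟨fun _ _ => rfl, by simp⟩⟩

lemma IsRearrangement.symm (h : IsRearrangement B C p q) (hp : ∀ j ∈ C, (j, p j) ∈ B) :
    IsRearrangement B C q p :=
  ⟨fun j hj => (h.eq_of_notMem j hj).symm, hp⟩

lemma IsRearrangement.image_eq (h : IsRearrangement B C p q) : q '' C = p '' C := by
  have hcompl : Set.EqOn q p (↑C)ᶜ := fun j hj => h.eq_of_notMem j hj
  rw [← compl_inj_iff, ← q.image_compl, ← p.image_compl, hcompl.image_eq]

lemma IsRearrangement.exists_eq (h : IsRearrangement B C p q) {x₀ : α} (hx₀ : x₀ ∈ C) :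
    ∃ x ∈ C, q x = p x₀ := by
  obtain ⟨x, hx, hqx⟩ : p x₀ ∈ q '' C := h.image_eq ▸ Set.mem_image_of_mem p hx₀
  exact ⟨x, hx, hqx⟩

lemma isRearrangement_erase_iff [DecidableEq α] {x₀ xₛ : α} (hxₛ : xₛ ∈ C) (hx₀ : x₀ ∈ C)
    (hB : (xₛ, p x₀) ∈ B) :
    IsRearrangement B (C.erase xₛ) (p * Equiv.swap xₛ x₀) q ↔
      IsRearrangement B C p q ∧ q xₛ = p x₀ := by
  have hswap : ∀ j ∉ C, (p * Equiv.swap xₛ x₀) j = p j := fun j hj => by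
    rw [Equiv.Perm.mul_apply, Equiv.swap_apply_of_ne_of_ne (ne_of_mem_of_not_mem hxₛ hj).symm
      (ne_of_mem_of_not_mem hx₀ hj).symm]
  constructor
  · intro h
    have hqxₛ : q xₛ = p x₀ := by simpa using h.eq_of_notMem xₛ (C.notMem_erase xₛ)
    refine ⟨⟨fun j hj => ?_, fun j hj => ?_⟩, hqxₛ⟩
    · rw [h.eq_of_notMem j fun hj' => hj (Finset.mem_of_mem_erase hj'), hswap j hj]
    · by_cases hjxₛ : j = xₛ
      · exact hjxₛ ▸ hqxₛ ▸ hB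
      · exact h.mem_board j (Finset.mem_erase.2 ⟨hjxₛ, hj⟩)
  · rintro ⟨h, hqxₛ⟩
    refine ⟨fun j hj => ?_, fun j hj => h.mem_board j (Finset.mem_of_mem_erase hj)⟩
    by_cases hjxₛ : j = xₛ
    · simp [hjxₛ, hqxₛ]
    · have hjC : j ∉ C := fun hjC => hj (Finset.mem_erase.2 ⟨hjxₛ, hjC⟩)
      rw [h.eq_of_notMem j hjC, hswap j hjC]

variable [LinearOrder α]

def Avoids21On (B : Set (α × α)) (C : Finset α) (q : α → α) : Prop :=
  ∀ ⦃i⦄, i ∈ C → ∀ ⦃j⦄, j ∈ C → i < j → (j, q i) ∈ B → q i < q j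

lemma Avoids21On.mono {C' : Finset α} {q : α → α} (h : Avoids21On B C q) (hC : C' ⊆ C) :
    Avoids21On B C' q :=
  fun _ hi _ hj => h (hC hi) (hC hj)

lemma IsRearrangement.le_of_forall_le (h : IsRearrangement B C p q) {x₀ : α}
    (hmax : ∀ j ∈ C, p j ≤ p x₀) {j : α} (hj : j ∈ C) : q j ≤ p x₀ := by
  obtain ⟨i, hi, hij⟩ : q j ∈ p '' C := h.image_eq ▸ Set.mem_image_of_mem q hj
  exact hij ▸ hmax i hi

lemma mul_swap_mem_board [DecidableEq α] {x₀ xₛ : α} (hB : IsLowerSet B)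
    (hp : ∀ j ∈ C, (j, p j) ∈ B) (hx₀ : x₀ ∈ C) (hmax : ∀ j ∈ C, p j ≤ p x₀)
    (hxₛ : xₛ ∈ C) : ∀ j ∈ C.erase xₛ, (j, (p * Equiv.swap xₛ x₀) j) ∈ B := by
  intro j hj
  obtain ⟨hjxₛ, hjC⟩ := Finset.mem_erase.1 hj
  by_cases hjx₀ : j = x₀
  · subst hjx₀
    simpa using hB (Prod.mk_le_mk.2 ⟨le_rfl, hmax xₛ hxₛ⟩) (hp j hjC)
  · simpa [Equiv.swap_apply_of_ne_of_ne hjxₛ hjx₀] using hp j hjC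

theorem existsUnique_isRearrangement_avoids21On (hB : IsLowerSet B) (C : Finset α)
    (p : Equiv.Perm α) (hp : ∀ j ∈ C, (j, p j) ∈ B) :
    ∃! q : Equiv.Perm α, IsRearrangement B C p q ∧ Avoids21On B C q := by
  classical
  induction C using Finset.strongInduction generalizing p with
  | H C ih =>
  rcases C.eq_empty_or_nonempty with rfl | hC
  · refine ⟨p, ⟨isRearrangement_empty_iff.2 rfl, by simp [Avoids21On]⟩, fun q hq => ?_⟩
    exact isRearrangement_empty_iff.1 hq.1
  -- The largest value goes to the rightmost column that its row reaches in the board.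
  obtain ⟨x₀, hx₀, hmax⟩ := C.exists_max_image p hC
  obtain ⟨xₛ, hxₛ, hxₛ_max⟩ := (C.filter fun x => (x, p x₀) ∈ B).exists_max_image id
    ⟨x₀, Finset.mem_filter.2 ⟨hx₀, hp x₀ hx₀⟩⟩
  simp only [Finset.mem_filter, id, and_imp] at hxₛ hxₛ_max
  have hiff := fun q => isRearrangement_erase_iff (q := q) hxₛ.1 hx₀ hxₛ.2
  obtain ⟨q, ⟨hq, hq21⟩, hq_unique⟩ := ih _ (C.erase_ssubset hxₛ.1) (p * Equiv.swap xₛ x₀)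
    (mul_swap_mem_board hB hp hx₀ hmax hxₛ.1)
  obtain ⟨hqC, hqxₛ⟩ := (hiff q).1 hq
  refine ⟨q, ⟨hqC, fun i hi j hj hij hji => ?_⟩, fun q' ⟨hq'C, hq'21⟩ => hq_unique q' ⟨?_, ?_⟩⟩
  · by_cases hixₛ : i = xₛ
    · subst hixₛ
      exact absurd (hxₛ_max j hj (hqxₛ ▸ hji)) (not_le.2 hij)
    by_cases hjxₛ : j = xₛ
    · subst hjxₛ
      rw [hqxₛ]
      exact (hqC.le_of_forall_le hmax hi).lt_of_ne (hqxₛ ▸ q.injective.ne hij.ne)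
    exact hq21 (Finset.mem_erase.2 ⟨hixₛ, hi⟩) (Finset.mem_erase.2 ⟨hjxₛ, hj⟩) hij hji
  · refine (hiff q').2 ⟨hq'C, ?_⟩
    obtain ⟨x, hx, hq'x⟩ := hq'C.exists_eq hx₀
    obtain rfl | hlt := (hxₛ_max x hx (hq'x ▸ hq'C.mem_board x hx)).eq_or_lt
    · exact hq'x
    · have hlt' := hq'21 hx hxₛ.1 hlt (hq'x ▸ hxₛ.2)
      exact absurd hlt' (hq'x ▸ not_lt.2 (hq'C.le_of_forall_le hmax hxₛ.1))
  · exact hq'21.mono (C.erase_subset xₛ)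

theorem existsUnique_isRearrangement_strictAntiOn (hB : IsLowerSet B) (C : Finset α)
    (p : Equiv.Perm α) (hp : ∀ j ∈ C, (j, p j) ∈ B) :
    ∃! q : Equiv.Perm α, IsRearrangement B C p q ∧ StrictAntiOn q C := by
  classical
  induction C using Finset.strongInduction generalizing p with
  | H C ih =>
  rcases C.eq_empty_or_nonempty with rfl | hC
  · refine ⟨p, ⟨isRearrangement_empty_iff.2 rfl, by simp [StrictAntiOn]⟩, fun q hq => ?_⟩
    exact isRearrangement_empty_iff.1 hq.1
  -- The largest value goes to the leftmost column.
  obtain ⟨x₀, hx₀, hmax⟩ := C.exists_max_image p hC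
  obtain ⟨xₛ, hxₛ, hxₛ_min⟩ := C.exists_min_image id hC
  have hxₛB : (xₛ, p x₀) ∈ B := hB (Prod.mk_le_mk.2 ⟨hxₛ_min x₀ hx₀, le_rfl⟩) (hp x₀ hx₀)
  have hiff := fun q => isRearrangement_erase_iff (q := q) hxₛ hx₀ hxₛB
  obtain ⟨q, ⟨hq, hq_anti⟩, hq_unique⟩ := ih _ (C.erase_ssubset hxₛ) (p * Equiv.swap xₛ x₀)
    (mul_swap_mem_board hB hp hx₀ hmax hxₛ)
  obtain ⟨hqC, hqxₛ⟩ := (hiff q).1 hq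
  refine ⟨q, ⟨hqC, fun i hi j hj hij => ?_⟩, fun q' ⟨hq'C, hq'_anti⟩ => hq_unique q' ⟨?_, ?_⟩⟩
  · have hjxₛ : j ≠ xₛ := fun h => not_le.2 (h ▸ hij) (hxₛ_min i hi)
    by_cases hixₛ : i = xₛ
    · subst hixₛ
      rw [hqxₛ]
      exact (hqC.le_of_forall_le hmax hj).lt_of_ne (hqxₛ ▸ q.injective.ne hij.ne')
    exact hq_anti (Finset.mem_erase.2 ⟨hixₛ, hi⟩) (Finset.mem_erase.2 ⟨hjxₛ, hj⟩) hij
  · refine (hiff q').2 ⟨hq'C, ?_⟩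
    obtain ⟨x, hx, hq'x⟩ := hq'C.exists_eq hx₀
    obtain rfl | hlt := (hxₛ_min x hx).eq_or_lt
    · exact hq'x
    · exact absurd (hq'_anti hxₛ hx hlt) (hq'x ▸ not_lt.2 (hq'C.le_of_forall_le hmax hxₛ))
  · exact hq'_anti.mono (C.erase_subset xₛ)

end Rearrangement

section Patterns

variable {n m : ℕ}

lemma contains_perm_iff {k : ℕ} {p : Fin n → Fin n} {q : Equiv.Perm (Fin k)} :
    Contains p q ↔ ∃ f : Fin k → Fin n, StrictMono f ∧ StrictMono (p ∘ f ∘ q.symm) := by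
  refine exists_congr fun f => and_congr_right fun _ => ⟨fun h a b hab => ?_, fun h a b => ?_⟩
  · simpa using (h _ _).1 (by simpa using hab)
  · simpa using (h.lt_iff_lt (a := q a) (b := q b)).symm

lemma comp_vecCons {α β : Type*} (φ : α → β) (a : α) (f : Fin m → α) :
    φ ∘ vecCons a f = vecCons (φ a) (φ ∘ f) :=
  Fin.comp_cons φ a f

lemma exists_strictMono_iff_vecCons {α : Type*} [Preorder α] {P : (Fin (m + 3) → α) → Prop} :
    (∃ f, StrictMono f ∧ P f) ↔
      ∃ i j g, i < j ∧ j < g 0 ∧ StrictMono g ∧ P (vecCons i (vecCons j g)) := by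
  constructor
  · rintro ⟨f, hf, hP⟩
    rw [← cons_head_tail f, ← cons_head_tail (vecTail f)] at hf hP
    simp only [strictMono_vecCons] at hf
    exact ⟨_, _, _, hf.1, hf.2.1, hf.2.2, hP⟩
  · rintro ⟨i, j, g, hij, hjg, hg, hP⟩
    exact ⟨_, strictMono_vecCons.2 ⟨hij, strictMono_vecCons.2 ⟨hjg, hg⟩⟩, hP⟩

lemma vecCons_comp_swap {α : Type*} (a b : α) (g : Fin m → α) :
    vecCons a (vecCons b g) ∘ Equiv.swap 0 1 = vecCons b (vecCons a g) := by
  ext l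
  refine Fin.cases ?_ (Fin.cases ?_ fun l => ?_) l
  · simp
  · simp
  · rw [Function.comp_apply,
      Equiv.swap_apply_of_ne_of_ne (Fin.succ_ne_zero _) (by simp [Fin.ext_iff])]
    simp

def chainShadow (m : ℕ) (p : Fin n → Fin n) : Set (Fin n × Fin n) :=
  {c | ∃ g : Fin (m + 1) → Fin n, StrictMono g ∧ StrictMono (p ∘ g) ∧ c.1 < g 0 ∧ c.2 < p (g 0)}

lemma contains_id_iff {p : Fin n → Fin n} :
    Contains p (id : Fin (m + 3) → Fin (m + 3)) ↔
      ∃ i j, i < j ∧ p i < p j ∧ (j, p j) ∈ chainShadow m p := by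
  rw [show (id : Fin (m + 3) → Fin (m + 3)) = ⇑(Equiv.refl _) from rfl, contains_perm_iff,
    exists_strictMono_iff_vecCons]
  simp only [Equiv.refl_symm, Equiv.coe_refl, Function.comp_id, comp_vecCons, strictMono_vecCons,
    cons_val_zero, Function.comp_apply, chainShadow, Set.mem_ofPred_eq]
  exact ⟨fun ⟨i, j, g, hij, hjg, hg, h₁, h₂, hpg⟩ => ⟨i, j, hij, h₁, g, hg, hpg, hjg, h₂⟩,
    fun ⟨i, j, hij, h₁, g, hg, hpg, hjg, h₂⟩ => ⟨i, j, g, hij, hjg, hg, h₁, h₂, hpg⟩⟩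

lemma contains_swap_iff {p : Fin n → Fin n} :
    Contains p ⇑(Equiv.swap (0 : Fin (m + 3)) 1) ↔
      ∃ i j, i < j ∧ p j < p i ∧ (j, p i) ∈ chainShadow m p := by
  rw [contains_perm_iff, exists_strictMono_iff_vecCons]
  simp only [Equiv.symm_swap, vecCons_comp_swap, comp_vecCons, strictMono_vecCons, cons_val_zero,
    Function.comp_apply, chainShadow, Set.mem_ofPred_eq]
  exact ⟨fun ⟨i, j, g, hij, hjg, hg, h₁, h₂, hpg⟩ => ⟨i, j, hij, h₁, g, hg, hpg, hjg, h₂⟩,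
    fun ⟨i, j, hij, h₁, g, hg, hpg, hjg, h₂⟩ => ⟨i, j, g, hij, hjg, hg, h₁, h₂, hpg⟩⟩

lemma isLowerSet_chainShadow (m : ℕ) (p : Fin n → Fin n) : IsLowerSet (chainShadow m p) :=
  fun _ _ hle ⟨g, hg, hpg, h₁, h₂⟩ => ⟨g, hg, hpg, hle.1.trans_lt h₁, hle.2.trans_lt h₂⟩

open Classical in
noncomputable def shadedIndices (m : ℕ) (p : Fin n → Fin n) : Finset (Fin n) :=
  Finset.univ.filter fun j => (j, p j) ∈ chainShadow m p

lemma mem_shadedIndices {p : Fin n → Fin n} {j : Fin n} :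
    j ∈ shadedIndices m p ↔ (j, p j) ∈ chainShadow m p := by
  simp [shadedIndices]

lemma exists_chain_notMem_shadedIndices {p : Fin n → Fin n} {c : Fin n × Fin n}
    (hc : c ∈ chainShadow m p) :
    ∃ g : Fin (m + 1) → Fin n, StrictMono g ∧ StrictMono (p ∘ g) ∧ c.1 < g 0 ∧ c.2 < p (g 0) ∧
      ∀ i, g i ∉ shadedIndices m p := by
  classical
  obtain ⟨g₀, hg₀⟩ := hc
  -- A chain starting as far right as possible: a chain above one of its points would start further
  -- right still.
  obtain ⟨g, hg, hg_max⟩ := (Finset.univ.filter fun g : Fin (m + 1) → Fin n =>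
    StrictMono g ∧ StrictMono (p ∘ g) ∧ c.1 < g 0 ∧ c.2 < p (g 0)).exists_max_image (· 0)
    ⟨g₀, by simpa using hg₀⟩
  simp only [Finset.mem_filter, Finset.mem_univ, true_and] at hg hg_max
  obtain ⟨hmono, hpmono, h₁, h₂⟩ := hg
  refine ⟨g, hmono, hpmono, h₁, h₂, fun i hi => ?_⟩
  obtain ⟨g', hmono', hpmono', h₁', h₂'⟩ := mem_shadedIndices.1 hi
  have hg0 : g 0 ≤ g i := hmono.monotone (Fin.zero_le i)
  have hpg0 : p (g 0) ≤ p (g i) := hpmono.monotone (Fin.zero_le i)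
  have hg' := hg_max g'
    ⟨hmono', hpmono', h₁.trans_le hg0 |>.trans h₁', h₂.trans_le hpg0 |>.trans h₂'⟩
  exact hg'.not_gt (hg0.trans_lt h₁')

lemma IsRearrangement.chainShadow_eq {P Q : Equiv.Perm (Fin n)}
    (h : IsRearrangement (chainShadow m P) (shadedIndices m P) P Q) :
    chainShadow m Q = chainShadow m P := by
  have hsub : chainShadow m P ⊆ chainShadow m Q := fun c hc => by
    obtain ⟨g, hg, hpg, h₁, h₂, hout⟩ := exists_chain_notMem_shadedIndices hc
    have hQg : ∀ i, Q (g i) = P (g i) := fun i => h.eq_of_notMem _ (hout i)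
    exact ⟨g, hg, by rwa [show ⇑Q ∘ g = P ∘ g from funext hQg], h₁, by rwa [hQg 0]⟩
  refine (Set.Subset.antisymm ?_ hsub)
  intro c hc
  obtain ⟨g, hg, hQg, h₁, h₂, hout⟩ := exists_chain_notMem_shadedIndices hc
  have hPg : ∀ i, P (g i) = Q (g i) := fun i => (h.eq_of_notMem _ fun hi =>
    hout i (mem_shadedIndices.2 (hsub (h.mem_board _ hi)))).symm
  exact ⟨g, hg, by rwa [show ⇑P ∘ g = Q ∘ g from funext hPg], h₁, by rwa [hPg 0]⟩

lemma IsRearrangement.shadedIndices_eq {P Q : Equiv.Perm (Fin n)}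
    (h : IsRearrangement (chainShadow m P) (shadedIndices m P) P Q) :
    shadedIndices m Q = shadedIndices m P := by
  ext j
  rw [mem_shadedIndices, mem_shadedIndices, h.chainShadow_eq]
  by_cases hj : j ∈ shadedIndices m P
  · exact iff_of_true (h.mem_board j hj) (mem_shadedIndices.1 hj)
  · rw [h.eq_of_notMem j hj]

lemma avoids_id_iff (P : Equiv.Perm (Fin n)) :
    Avoids P (id : Fin (m + 3) → Fin (m + 3)) ↔ StrictAntiOn P (shadedIndices m P) := by
  rw [Avoids, contains_id_iff]
  constructor
  · intro h i hi j hj hij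
    by_contra hle
    exact h ⟨i, j, hij, (not_lt.1 hle).lt_of_ne (P.injective.ne hij.ne), mem_shadedIndices.1 hj⟩
  · rintro h ⟨i, j, hij, hlt, hj⟩
    have hi : (i, P i) ∈ chainShadow m P :=
      isLowerSet_chainShadow m P (Prod.mk_le_mk.2 ⟨hij.le, hlt.le⟩) hj
    exact (h (mem_shadedIndices.2 hi) (mem_shadedIndices.2 hj) hij).not_gt hlt

lemma avoids_swap_iff (P : Equiv.Perm (Fin n)) :
    Avoids P ⇑(Equiv.swap (0 : Fin (m + 3)) 1) ↔
      Avoids21On (chainShadow m P) (shadedIndices m P) P := by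
  rw [Avoids, contains_swap_iff]
  constructor
  · intro h i _ j _ hij hji
    by_contra hle
    exact h ⟨i, j, hij, (not_lt.1 hle).lt_of_ne (P.injective.ne hij.ne'), hji⟩
  · rintro h ⟨i, j, hij, hlt, hji⟩
    have hi := isLowerSet_chainShadow m P (Prod.mk_le_mk.2 ⟨hij.le, le_rfl⟩) hji
    have hj := isLowerSet_chainShadow m P (Prod.mk_le_mk.2 ⟨le_rfl, hlt.le⟩) hji
    exact (h (mem_shadedIndices.2 hi) (mem_shadedIndices.2 hj) hij hji).not_gt hlt

lemma existsUnique_avoids21On (m : ℕ) (P : Equiv.Perm (Fin n)) :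
    ∃! Q : Equiv.Perm (Fin n), IsRearrangement (chainShadow m P) (shadedIndices m P) P Q ∧
      Avoids21On (chainShadow m P) (shadedIndices m P) Q :=
  existsUnique_isRearrangement_avoids21On (isLowerSet_chainShadow m P) _ P
    fun _ => mem_shadedIndices.1

lemma existsUnique_strictAntiOn (m : ℕ) (P : Equiv.Perm (Fin n)) :
    ∃! Q : Equiv.Perm (Fin n), IsRearrangement (chainShadow m P) (shadedIndices m P) P Q ∧
      StrictAntiOn Q (shadedIndices m P) :=
  existsUnique_isRearrangement_strictAntiOn (isLowerSet_chainShadow m P) _ P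
    fun _ => mem_shadedIndices.1

noncomputable def rearrangeAvoiding21 (m : ℕ) (P : Equiv.Perm (Fin n)) : Equiv.Perm (Fin n) :=
  (existsUnique_avoids21On m P).exists.choose

lemma rearrangeAvoiding21_spec (P : Equiv.Perm (Fin n)) :
    IsRearrangement (chainShadow m P) (shadedIndices m P) P (rearrangeAvoiding21 m P) ∧
      Avoids21On (chainShadow m P) (shadedIndices m P) (rearrangeAvoiding21 m P) :=
  (existsUnique_avoids21On m P).exists.choose_spec

noncomputable def rearrangeDecreasing (m : ℕ) (P : Equiv.Perm (Fin n)) : Equiv.Perm (Fin n) :=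
  (existsUnique_strictAntiOn m P).exists.choose

lemma rearrangeDecreasing_spec (P : Equiv.Perm (Fin n)) :
    IsRearrangement (chainShadow m P) (shadedIndices m P) P (rearrangeDecreasing m P) ∧
      StrictAntiOn (rearrangeDecreasing m P) (shadedIndices m P) :=
  (existsUnique_strictAntiOn m P).exists.choose_spec

noncomputable def strictAntiOnEquivAvoids21On (m n : ℕ) :
    {P : Equiv.Perm (Fin n) // StrictAntiOn P (shadedIndices m P)} ≃
      {P : Equiv.Perm (Fin n) // Avoids21On (chainShadow m P) (shadedIndices m P) P} where
  toFun P := ⟨rearrangeAvoiding21 m P, by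
    obtain ⟨hQ, hQ21⟩ := rearrangeAvoiding21_spec (m := m) P.1
    rwa [hQ.chainShadow_eq, hQ.shadedIndices_eq]⟩
  invFun P := ⟨rearrangeDecreasing m P, by
    obtain ⟨hQ, hQ_anti⟩ := rearrangeDecreasing_spec (m := m) P.1
    rwa [hQ.shadedIndices_eq]⟩
  left_inv P := by
    obtain ⟨hQ, -⟩ := rearrangeAvoiding21_spec (m := m) P.1
    refine Subtype.ext ((existsUnique_strictAntiOn m _).unique (rearrangeDecreasing_spec _) ?_)
    rw [hQ.chainShadow_eq, hQ.shadedIndices_eq]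
    exact ⟨hQ.symm fun _ => mem_shadedIndices.1, P.2⟩
  right_inv P := by
    obtain ⟨hQ, -⟩ := rearrangeDecreasing_spec (m := m) P.1
    refine Subtype.ext ((existsUnique_avoids21On m _).unique (rearrangeAvoiding21_spec _) ?_)
    rw [hQ.chainShadow_eq, hQ.shadedIndices_eq]
    exact ⟨hQ.symm fun _ => mem_shadedIndices.1, P.2⟩

end Patterns

theorem card_avoids_id_eq_card_avoids_swap (m n : ℕ) :
    Nat.card {P : Equiv.Perm (Fin n) // Avoids P (id : Fin (m + 3) → Fin (m + 3))} =
      Nat.card {P : Equiv.Perm (Fin n) // Avoids P ⇑(Equiv.swap (0 : Fin (m + 3)) 1)} :=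
  Nat.card_congr <| (Equiv.subtypeEquivRight avoids_id_iff).trans <|
    (strictAntiOnEquivAvoids21On m n).trans
      (Equiv.subtypeEquivRight fun P => (avoids_swap_iff P).symm)

theorem stmt13 (k n : ℕ) (hk : 3 ≤ k) :
    Nat.card {p : Fin n → Fin n // Function.Bijective p ∧ Avoids p (id : Fin k → Fin k)} =
    Nat.card {p : Fin n → Fin n // Function.Bijective p ∧
      Avoids p ⇑(Equiv.swap (⟨0, by omega⟩ : Fin k) ⟨1, by omega⟩)} := by
  obtain ⟨m, rfl⟩ : ∃ m, k = m + 3 := ⟨k - 3, by omega⟩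
  rw [Nat.card_congr (bijectiveSubtypeEquivPerm _), Nat.card_congr (bijectiveSubtypeEquivPerm _)]
  exact card_avoids_id_eq_card_avoids_swap m n
end
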